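/- arXiv:1111.1294 — 2 statements merged into one kernel-verified Lean document; each statement's English description precedes it below -/
import Mathlib

section
/- The Apéry set of S is γ-rectangular if and only if f + m = Σ_{i=2}^ν γ_i g_i, and this holds if and only if m = Π_{i=2}^ν (γ_i + 1). -/
open Finset

/-- `S` is a numerical semigroup: a submonoid of `(ℕ, +)` with finite complement. -/
def IsNumSgp (S : Set ℕ) : Prop :=
  0 ∈ S ∧ (∀ a ∈ S, ∀ b ∈ S, a + b ∈ S) ∧ (Sᶜ : Set ℕ).Finite

/-- `s` belongs to the Apéry set of `S` with respect to `m`: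
`s ∈ S` and `s - m ∉ S` (i.e. no `u ∈ S` with `u + m = s`). -/
def InApery (S : Set ℕ) (m s : ℕ) : Prop :=
  s ∈ S ∧ ∀ u ∈ S, u + m ≠ s

def AperySet (S : Set ℕ) (m : ℕ) : Set ℕ := {s | InApery S m s}

/-- `ordS S s` is the largest `h` such that `s` is a sum of `h` nonzero elements of `S`. -/
noncomputable def ordS (S : Set ℕ) (s : ℕ) : ℕ :=
  sSup {h : ℕ | ∃ f : Fin h → ℕ, (∀ j, f j ∈ S ∧ f j ≠ 0) ∧ ∑ j, f j = s}

/-- `g` generates `S`. -/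
def Generates (S : Set ℕ) {ν : ℕ} (g : Fin ν → ℕ) : Prop :=
  ∀ s, s ∈ S ↔ ∃ lam : Fin ν → ℕ, ∑ i, lam i * g i = s

/-- `g` is a minimal generating system of `S`: it generates `S`
and no `g i` is generated by the remaining generators. -/
def MinimalGen (S : Set ℕ) {ν : ℕ} (g : Fin ν → ℕ) : Prop :=
  Generates S g ∧ ∀ i, ¬ ∃ lam : Fin ν → ℕ, lam i = 0 ∧ ∑ j, lam j * g j = g i

/-- `lam` is a maximal representation of `s`: the coefficient sum equals `ordS S s`. -/
def IsMaxRep (S : Set ℕ) {ν : ℕ} (g : Fin ν → ℕ) (lam : Fin ν → ℕ) (s : ℕ) : Prop :=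
  ∑ i, lam i * g i = s ∧ ∑ i, lam i = ordS S s

/-- `s` has a unique maximal representation. -/
def UniqueMaxRep (S : Set ℕ) {ν : ℕ} (g : Fin ν → ℕ) (s : ℕ) : Prop :=
  ∃! lam : Fin ν → ℕ, IsMaxRep S g lam s

/-- `β_i = max {h | h g_i ∈ Ap(S) and ord(h g_i) = h}`. -/
noncomputable def betaN (S : Set ℕ) (m : ℕ) {ν : ℕ} (g : Fin ν → ℕ) (i : Fin ν) : ℕ :=
  sSup {h : ℕ | InApery S m (h * g i) ∧ ordS S (h * g i) = h}

/-- `γ_i = max {h | h g_i ∈ Ap(S), ord(h g_i) = h and h g_i has a unique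
maximal representation}`. -/
noncomputable def gammaN (S : Set ℕ) (m : ℕ) {ν : ℕ} (g : Fin ν → ℕ) (i : Fin ν) : ℕ :=
  sSup {h : ℕ | InApery S m (h * g i) ∧ ordS S (h * g i) = h ∧ UniqueMaxRep S g (h * g i)}

/-- `B = {Σ_{i≥2} λ_i g_i : 0 ≤ λ_i ≤ β_i}`. -/
def Bset (S : Set ℕ) (m : ℕ) {ν : ℕ} [NeZero ν] (g : Fin ν → ℕ) : Set ℕ :=
  {s | ∃ lam : Fin ν → ℕ, lam 0 = 0 ∧ (∀ i, lam i ≤ betaN S m g i) ∧ ∑ i, lam i * g i = s}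

/-- `Γ = {Σ_{i≥2} λ_i g_i : 0 ≤ λ_i ≤ γ_i}`. -/
def GammaSet (S : Set ℕ) (m : ℕ) {ν : ℕ} [NeZero ν] (g : Fin ν → ℕ) : Set ℕ :=
  {s | ∃ lam : Fin ν → ℕ, lam 0 = 0 ∧ (∀ i, lam i ≤ gammaN S m g i) ∧ ∑ i, lam i * g i = s}

/-- `s ⪯_M t`. -/
def predM (S : Set ℕ) (s t : ℕ) : Prop :=
  ∃ u ∈ S, s + u = t ∧ ordS S s + ordS S u = ordS S t

/-!
Among the maximal representations of an element `w` of `Ap(S)`, take one maximising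
`Σ λ_i g_i²`. It satisfies `λ_k ≤ γ_k` for every `k`: otherwise `(γ_k + 1) g_k` is a summand
of `w` in `Ap(S)` with order `γ_k + 1` and, by the maximality of `γ_k`, a second maximal
representation; since it has the same coefficient sum and the same value, strict convexity of
`x ↦ x²` makes trading it in increase `Σ λ_i g_i²`. Hence `Ap(S) ⊆ Γ` always, and `Γ ⊆ Ap(S)`
exactly when the largest element `Σ γ_i g_i` of `Γ` is `f + m`. In that case `(γ_i)` is the only
maximising representation of `f + m`, and exchanging parts of it shows that `λ ↦ Σ λ_i g_i` is
injective on the box `0 ≤ λ ≤ γ`; comparing `|Ap(S)| = m` with the size `Π (γ_i + 1)` of the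
box gives the second equivalence.
-/

open Function

section Representations

variable {S : Set ℕ} {ν : ℕ} {g : Fin ν → ℕ}

theorem Generates.dotProduct_mem (hgen : Generates S g) (lam : Fin ν → ℕ) : lam ⬝ᵥ g ∈ S :=
  (hgen _).2 ⟨lam, rfl⟩

theorem Generates.apply_mem (hgen : Generates S g) (i : Fin ν) : g i ∈ S := by
  simpa using hgen.dotProduct_mem (Pi.single i 1)

theorem Generates.add_mem (hgen : Generates S g) : ∀ a ∈ S, ∀ b ∈ S, a + b ∈ S := by
  rintro _ ha _ hb
  obtain ⟨la, rfl⟩ := (hgen _).1 ha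
  obtain ⟨lb, rfl⟩ := (hgen _).1 hb
  exact (hgen _).2 ⟨la + lb, add_dotProduct la lb g⟩

/-- `ordS S s` is `sSup (ordLengths S s)` definitionally. -/
def ordLengths (S : Set ℕ) (s : ℕ) : Set ℕ :=
  {h | ∃ F : Fin h → ℕ, (∀ j, F j ∈ S ∧ F j ≠ 0) ∧ ∑ j, F j = s}

theorem bddAbove_ordLengths (S : Set ℕ) (s : ℕ) : BddAbove (ordLengths S s) := by
  refine ⟨s, ?_⟩
  rintro h ⟨F, hF, rfl⟩
  calc h = ∑ _j : Fin h, 1 := by simp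
    _ ≤ ∑ j, F j := sum_le_sum fun j _ => Nat.one_le_iff_ne_zero.2 (hF j).2

theorem card_mem_ordLengths {α : Type*} [Fintype α] (F : α → ℕ) (hF : ∀ a, F a ∈ S ∧ F a ≠ 0) :
    Fintype.card α ∈ ordLengths S (∑ a, F a) :=
  ⟨F ∘ (Fintype.equivFin α).symm, fun _ => hF _, (Fintype.equivFin α).symm.sum_comp F⟩

theorem sum_mem_ordLengths (hgen : Generates S g) (hpos : ∀ i, 0 < g i) (lam : Fin ν → ℕ) :
    ∑ i, lam i ∈ ordLengths S (lam ⬝ᵥ g) := by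
  have := card_mem_ordLengths (S := S) (α := Σ i, Fin (lam i)) (fun x => g x.1)
    fun x => ⟨hgen.apply_mem _, (hpos _).ne'⟩
  simpa [Fintype.sum_sigma, dotProduct] using this

theorem sum_le_ordS (hgen : Generates S g) (hpos : ∀ i, 0 < g i) (lam : Fin ν → ℕ) :
    ∑ i, lam i ≤ ordS S (lam ⬝ᵥ g) :=
  le_csSup (bddAbove_ordLengths _ _) (sum_mem_ordLengths hgen hpos lam)

theorem exists_isMaxRep (hgen : Generates S g) (hpos : ∀ i, 0 < g i) {w : ℕ} (hw : w ∈ S) :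
    ∃ lam, IsMaxRep S g lam w := by
  obtain ⟨lam₀, hlam₀ : lam₀ ⬝ᵥ g = w⟩ := (hgen w).1 hw
  obtain ⟨F, hF, hFw⟩ : ordS S w ∈ ordLengths S w :=
    Nat.sSup_mem ⟨_, hlam₀ ▸ sum_mem_ordLengths hgen hpos lam₀⟩ (bddAbove_ordLengths _ _)
  choose lamF hlamF using fun j => (hgen (F j)).1 (hF j).1
  have hval : (∑ j, lamF j) ⬝ᵥ g = w := by
    rw [sum_dotProduct]
    exact (sum_congr rfl fun j _ => hlamF j).trans hFw
  refine ⟨∑ j, lamF j, hval, le_antisymm ?_ ?_⟩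
  · simpa only [hval] using sum_le_ordS hgen hpos (∑ j, lamF j)
  calc ordS S w = ∑ _j : Fin _, 1 := by simp
      _ ≤ ∑ j, ∑ i, lamF j i := sum_le_sum fun j _ => by
        refine Nat.one_le_iff_ne_zero.2 fun h0 => (hF j).2 ?_
        rw [← hlamF j]
        exact Fintype.sum_eq_zero _ fun i => by rw [sum_eq_zero_iff.1 h0 i (mem_univ i), zero_mul]
      _ = ∑ i, (∑ j, lamF j) i := by simp only [Finset.sum_apply]; exact sum_comm

theorem IsMaxRep.of_add (hgen : Generates S g) (hpos : ∀ i, 0 < g i) {μ d : Fin ν → ℕ} {w : ℕ}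
    (h : IsMaxRep S g (μ + d) w) : IsMaxRep S g μ (μ ⬝ᵥ g) := by
  obtain ⟨hv : (μ + d) ⬝ᵥ g = w, hs⟩ := h
  obtain ⟨ρ, hρv : ρ ⬝ᵥ g = μ ⬝ᵥ g, hρs⟩ := exists_isMaxRep hgen hpos (hgen.dotProduct_mem μ)
  have hle := sum_le_ordS hgen hpos (ρ + d)
  rw [add_dotProduct, hρv, ← add_dotProduct, hv, ← hs] at hle
  simp only [Pi.add_apply, sum_add_distrib] at hle
  exact ⟨rfl, le_antisymm (sum_le_ordS hgen hpos μ) (by omega)⟩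

theorem IsMaxRep.exchange (hgen : Generates S g) (hpos : ∀ i, 0 < g i) {μ d σ : Fin ν → ℕ}
    {w : ℕ} (h : IsMaxRep S g (μ + d) w) (hσ : IsMaxRep S g σ (μ ⬝ᵥ g)) :
    IsMaxRep S g (σ + d) w := by
  have hμ := h.of_add hgen hpos
  obtain ⟨hv : (μ + d) ⬝ᵥ g = w, hs⟩ := h
  obtain ⟨hσv : σ ⬝ᵥ g = μ ⬝ᵥ g, hσs⟩ := hσ
  refine ⟨show (σ + d) ⬝ᵥ g = w by rw [add_dotProduct, hσv, ← add_dotProduct, hv], ?_⟩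
  simp only [Pi.add_apply, sum_add_distrib] at hs ⊢
  rw [hσs, ← hμ.2, hs]

theorem exists_isMaxRep_forall_le (hgen : Generates S g) (hpos : ∀ i, 0 < g i) {w : ℕ}
    (hw : w ∈ S) :
    ∃ τ, IsMaxRep S g τ w ∧ ∀ ρ, IsMaxRep S g ρ w → ρ ⬝ᵥ g ^ 2 ≤ τ ⬝ᵥ g ^ 2 := by
  have hfin : {τ | IsMaxRep S g τ w}.Finite :=
    (Set.finite_Iic fun _ => w).subset fun τ hτ i =>
      calc τ i ≤ τ i * g i := Nat.le_mul_of_pos_right _ (hpos i)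
        _ ≤ ∑ j, τ j * g j := single_le_sum (f := fun j => τ j * g j) (by simp) (mem_univ i)
        _ = w := hτ.1
  exact Set.exists_max_image _ (· ⬝ᵥ g ^ 2) hfin (exists_isMaxRep hgen hpos hw)

end Representations

theorem eq_of_le_of_dotProduct_eq {ι : Type*} [Fintype ι] {g : ι → ℕ} (hpos : ∀ i, 0 < g i)
    {τ γ : ι → ℕ} (hle : τ ≤ γ) (heq : τ ⬝ᵥ g = γ ⬝ᵥ g) : τ = γ := by
  by_contra hne
  obtain ⟨i, hi⟩ := (Pi.lt_def.1 (hle.lt_of_ne hne)).2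
  refine heq.not_lt (sum_lt_sum (fun j _ => Nat.mul_le_mul_right _ (hle j)) ⟨i, mem_univ _, ?_⟩)
  exact Nat.mul_lt_mul_of_pos_right hi (hpos i)

section Apery

variable {S : Set ℕ} {m f : ℕ}

theorem InApery.le_frobenius_add (hfmax : ∀ n, f < n → n ∈ S) {w : ℕ} (hw : InApery S m w) :
    w ≤ f + m := by
  by_contra! hlt
  exact hw.2 (w - m) (hfmax _ (by omega)) (by omega)

theorem inApery_frobenius_add (hf : f ∉ S) (hfmax : ∀ n, f < n → n ∈ S) (hm : 0 < m) :
    InApery S m (f + m) :=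
  ⟨hfmax _ (by omega), fun u hu hum => hf (by rwa [Nat.add_right_cancel hum] at hu)⟩

theorem InApery.of_add (hadd : ∀ a ∈ S, ∀ b ∈ S, a + b ∈ S) {u v : ℕ} (hu : u ∈ S) (hv : v ∈ S)
    (h : InApery S m (u + v)) : InApery S m u :=
  ⟨hu, fun x hx hxu => h.2 (x + v) (hadd x hx v hv) (by omega)⟩

theorem InApery.eq_of_mod_eq (hadd : ∀ a ∈ S, ∀ b ∈ S, a + b ∈ S) (hmS : m ∈ S) {a b : ℕ}
    (ha : InApery S m a) (hb : InApery S m b) (hab : a % m = b % m) : a = b := by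
  wlog hle : a ≤ b generalizing a b
  · exact (this hb ha hab.symm (le_of_not_ge hle)).symm
  have hmul : ∀ n, a + m * n ∈ S := fun n => by
    induction n with
    | zero => simpa using ha.1
    | succ n ih => simpa [Nat.mul_succ, ← add_assoc] using hadd _ ih _ hmS
  obtain ⟨_ | n, hn⟩ : m ∣ b - a := (Nat.modEq_iff_dvd' hle).1 hab
  · omega
  · exact absurd (by rw [Nat.mul_succ] at hn; omega) (hb.2 _ (hmul n))

theorem exists_inApery_mod_eq (hfmax : ∀ n, f < n → n ∈ S) (hm : 0 < m) {r : ℕ} (hr : r < m) :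
    ∃ w, InApery S m w ∧ w % m = r := by
  classical
  have hex : ∃ n, n ∈ S ∧ n % m = r :=
    ⟨r + (f + 1) * m, hfmax _ (by nlinarith),
      by rw [Nat.add_mul_mod_self_right, Nat.mod_eq_of_lt hr]⟩
  obtain ⟨hS, hr⟩ := Nat.find_spec hex
  refine ⟨Nat.find hex, ⟨hS, fun u hu hum => ?_⟩, hr⟩
  refine Nat.find_min hex (by omega : u < Nat.find hex) ⟨hu, ?_⟩
  rw [← hr, ← hum, Nat.add_mod_right]

theorem ncard_aperySet (hadd : ∀ a ∈ S, ∀ b ∈ S, a + b ∈ S) (hmS : m ∈ S) (hm : 0 < m)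
    (hfmax : ∀ n, f < n → n ∈ S) : (AperySet S m).ncard = m := by
  have hbij : Set.BijOn (· % m) (AperySet S m) (range m) :=
    ⟨fun w _ => by simpa using Nat.mod_lt w hm,
      fun a ha b hb hab => InApery.eq_of_mod_eq hadd hmS ha hb hab,
      fun r hr => exists_inApery_mod_eq hfmax hm (by simpa using hr)⟩
  rw [hbij.ncard_eq, Set.ncard_coe_finset, card_range]

end Apery

theorem mul_sq_lt_dotProduct_sq {ι : Type*} [Fintype ι] [DecidableEq ι] {g : ι → ℕ}
    (hg : Injective g) {σ : ι → ℕ} {k : ι} {h : ℕ} (hsum : ∑ i, σ i = h)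
    (hval : σ ⬝ᵥ g = h * g k) (hne : σ ≠ Pi.single k h) : h * g k ^ 2 < σ ⬝ᵥ g ^ 2 := by
  obtain ⟨j, hjk, hj⟩ : ∃ j ≠ k, σ j ≠ 0 := by
    by_contra! h0
    refine hne (funext fun i => ?_)
    rcases eq_or_ne i k with rfl | hik
    · rw [Pi.single_eq_same, ← hsum, Fintype.sum_eq_single i h0]
    · rw [Pi.single_eq_of_ne hik, h0 i hik]
  -- the variance of `g` under the weights `σ`, centred at its mean `g k`
  have hvar : ((σ ⬝ᵥ g ^ 2 : ℕ) : ℤ) - h * g k ^ 2 = ∑ i, (σ i : ℤ) * (g i - g k) ^ 2 := by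
    have hsum' : ∑ i, (σ i : ℤ) = h := by exact_mod_cast hsum
    have hval' : ∑ i, (σ i : ℤ) * g i = h * g k := by exact_mod_cast hval
    have hexp : ∀ i, (σ i : ℤ) * (g i - g k) ^ 2
        = σ i * g i ^ 2 - 2 * g k * (σ i * g i) + g k ^ 2 * σ i := fun i => by ring
    simp only [hexp, sum_add_distrib, sum_sub_distrib, ← mul_sum, hsum', hval', dotProduct,
      Pi.pow_apply, Nat.cast_sum, Nat.cast_mul, Nat.cast_pow]
    ring
  have hpos : 0 < ∑ i, (σ i : ℤ) * (g i - g k) ^ 2 := by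
    refine lt_of_lt_of_le ?_ (single_le_sum (fun i _ => by positivity) (mem_univ j))
    have : (g j : ℤ) - g k ≠ 0 := sub_ne_zero.2 (by exact_mod_cast hg.ne hjk)
    positivity
  have : (h * g k ^ 2 : ℤ) < ((σ ⬝ᵥ g ^ 2 : ℕ) : ℤ) := by linarith
  exact_mod_cast this

theorem single_le_of_le_apply {ι : Type*} [DecidableEq ι] {lam : ι → ℕ} {k : ι} {a : ℕ}
    (h : a ≤ lam k) : Pi.single k a ≤ lam := fun i => by
  rcases eq_or_ne i k with rfl | hik <;> simp [*]

section Gamma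

variable {S : Set ℕ} {ν : ℕ} [NeZero ν] {g : Fin ν → ℕ} {f : ℕ}

theorem InApery.apply_zero_eq_zero (hgen : Generates S g) {lam : Fin ν → ℕ}
    (h : InApery S (g 0) (lam ⬝ᵥ g)) : lam 0 = 0 := by
  by_contra h0
  have hle : Pi.single 0 1 ≤ lam := single_le_of_le_apply (Nat.one_le_iff_ne_zero.2 h0)
  refine h.2 _ (hgen.dotProduct_mem (lam - Pi.single 0 1)) ?_
  conv_rhs => rw [← tsub_add_cancel_of_le hle]
  rw [add_dotProduct, single_dotProduct, one_mul]

theorem gammaN_zero (hgen : Generates S g) : gammaN S (g 0) g 0 = 0 := by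
  refine Nat.le_zero.1 (csSup_le' fun h hh => ?_)
  have hh₀ : InApery S (g 0) (Pi.single 0 h ⬝ᵥ g) := by rw [single_dotProduct]; exact hh.1
  simpa using hh₀.apply_zero_eq_zero hgen

theorem le_gammaN_of_mem (hpos : ∀ i, 0 < g i) (hfmax : ∀ n, f < n → n ∈ S) {k : Fin ν} {h : ℕ}
    (hh : InApery S (g 0) (h * g k) ∧ ordS S (h * g k) = h ∧ UniqueMaxRep S g (h * g k)) :
    h ≤ gammaN S (g 0) g k :=
  le_csSup ⟨f + g 0, fun h hh =>
    (Nat.le_mul_of_pos_right h (hpos k)).trans (hh.1.le_frobenius_add hfmax)⟩ hh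

theorem IsMaxRep.le_gammaN (hgen : Generates S g) (hpos : ∀ i, 0 < g i) (hinj : Injective g)
    (hfmax : ∀ n, f < n → n ∈ S) {w : ℕ} {τ : Fin ν → ℕ} (hw : InApery S (g 0) w)
    (hτ : IsMaxRep S g τ w) (hmax : ∀ ρ, IsMaxRep S g ρ w → ρ ⬝ᵥ g ^ 2 ≤ τ ⬝ᵥ g ^ 2) :
    τ ≤ gammaN S (g 0) g := by
  intro k
  by_contra! hk
  set h := gammaN S (g 0) g k + 1
  set μ : Fin ν → ℕ := Pi.single k h
  obtain ⟨d, rfl⟩ : ∃ d, τ = μ + d :=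
    ⟨τ - μ, (add_tsub_cancel_of_le (single_le_of_le_apply hk)).symm⟩
  have hμg : μ ⬝ᵥ g = h * g k := single_dotProduct g h k
  have hμ := hτ.of_add hgen hpos
  have hμap : InApery S (g 0) (μ ⬝ᵥ g) := by
    refine InApery.of_add hgen.add_mem (hgen.dotProduct_mem μ) (hgen.dotProduct_mem d) ?_
    rwa [← add_dotProduct, show (μ + d) ⬝ᵥ g = w from hτ.1]
  have hord : ordS S (μ ⬝ᵥ g) = h := by rw [← hμ.2]; simp [μ]
  -- by maximality of `γ_k`, the representation `μ` of `(γ_k + 1) g_k` is not the only maximal one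
  obtain ⟨σ, hσ, hσμ⟩ : ∃ σ, IsMaxRep S g σ (μ ⬝ᵥ g) ∧ σ ≠ μ := by
    by_contra! huniq
    rw [hμg] at hμap hord hμ huniq
    exact (le_gammaN_of_mem hpos hfmax ⟨hμap, hord, μ, hμ, huniq⟩).not_gt (Nat.lt_succ_self _)
  -- trading `μ` for `σ` inside `τ` would increase `τ ⬝ᵥ g ^ 2`
  have hconv := mul_sq_lt_dotProduct_sq hinj (hσ.2.trans hord) (hσ.1.trans hμg) hσμ
  have := hmax _ (hτ.exchange hgen hpos hσ)
  rw [add_dotProduct, add_dotProduct, single_dotProduct, Pi.pow_apply] at this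
  omega

end Gamma

section Rectangular

variable {S : Set ℕ} {ν : ℕ} [NeZero ν] {g : Fin ν → ℕ} {f : ℕ}

theorem gammaSet_eq_image (hgen : Generates S g) :
    GammaSet S (g 0) g = (· ⬝ᵥ g) '' Set.Iic (gammaN S (g 0) g) := by
  ext w
  constructor
  · rintro ⟨lam, -, hle, rfl⟩
    exact ⟨lam, hle, rfl⟩
  · rintro ⟨lam, hle, rfl⟩
    exact ⟨lam, Nat.le_zero.1 (gammaN_zero hgen ▸ hle 0), hle, rfl⟩

theorem aperySet_subset_gammaSet (hgen : Generates S g) (hpos : ∀ i, 0 < g i)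
    (hinj : Injective g) (hfmax : ∀ n, f < n → n ∈ S) :
    AperySet S (g 0) ⊆ GammaSet S (g 0) g := by
  intro w hw
  obtain ⟨τ, hτ, hmax⟩ := exists_isMaxRep_forall_le hgen hpos hw.1
  rw [gammaSet_eq_image hgen]
  exact ⟨τ, hτ.le_gammaN hgen hpos hinj hfmax hw hmax, hτ.1⟩

theorem gammaSet_subset_aperySet (hgen : Generates S g) (hm : 0 < g 0) (hf : f ∉ S)
    (hfmax : ∀ n, f < n → n ∈ S) (hb : f + g 0 = gammaN S (g 0) g ⬝ᵥ g) :
    GammaSet S (g 0) g ⊆ AperySet S (g 0) := by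
  rw [gammaSet_eq_image hgen]
  rintro _ ⟨lam, hle, rfl⟩
  refine InApery.of_add hgen.add_mem (hgen.dotProduct_mem lam)
    (hgen.dotProduct_mem (gammaN S (g 0) g - lam)) ?_
  rw [← add_dotProduct, add_tsub_cancel_of_le hle, ← hb]
  exact inApery_frobenius_add hf hfmax hm

theorem aperySet_eq_gammaSet_iff (hgen : Generates S g) (hpos : ∀ i, 0 < g i)
    (hinj : Injective g) (hf : f ∉ S) (hfmax : ∀ n, f < n → n ∈ S) :
    AperySet S (g 0) = GammaSet S (g 0) g ↔ f + g 0 = gammaN S (g 0) g ⬝ᵥ g := by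
  refine ⟨fun h => le_antisymm ?_ ?_, fun hb =>
    (aperySet_subset_gammaSet hgen hpos hinj hfmax).antisymm
      (gammaSet_subset_aperySet hgen (hpos 0) hf hfmax hb)⟩
  · obtain ⟨lam, hle, hlam⟩ : f + g 0 ∈ (· ⬝ᵥ g) '' Set.Iic (gammaN S (g 0) g) := by
      rw [← gammaSet_eq_image hgen, ← h]
      exact inApery_frobenius_add hf hfmax (hpos 0)
    rw [← hlam]
    exact dotProduct_le_dotProduct_of_nonneg_right hle fun _ => Nat.zero_le _
  · have : gammaN S (g 0) g ⬝ᵥ g ∈ AperySet S (g 0) := by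
      rw [h, gammaSet_eq_image hgen]
      exact ⟨_, Set.mem_Iic.2 le_rfl, rfl⟩
    exact InApery.le_frobenius_add hfmax this

theorem injOn_dotProduct_Iic_gammaN (hgen : Generates S g) (hpos : ∀ i, 0 < g i)
    (hinj : Injective g) (hf : f ∉ S) (hfmax : ∀ n, f < n → n ∈ S)
    (hb : f + g 0 = gammaN S (g 0) g ⬝ᵥ g) :
    Set.InjOn (· ⬝ᵥ g) (Set.Iic (gammaN S (g 0) g)) := by
  set γ := gammaN S (g 0) g
  have hF := inApery_frobenius_add hf hfmax (hpos 0)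
  obtain ⟨τ, hτ, hmax⟩ := exists_isMaxRep_forall_le hgen hpos hF.1
  have hτγ : τ = γ :=
    eq_of_le_of_dotProduct_eq hpos (hτ.le_gammaN hgen hpos hinj hfmax hF hmax) (hτ.1.trans hb)
  subst hτγ
  have huniq : ∀ ρ, IsMaxRep S g ρ (f + g 0) → γ ⬝ᵥ g ^ 2 ≤ ρ ⬝ᵥ g ^ 2 → ρ = γ :=
    fun ρ hρ hle => eq_of_le_of_dotProduct_eq hpos
      (hρ.le_gammaN hgen hpos hinj hfmax hF fun ρ' hρ' => (hmax ρ' hρ').trans hle) (hρ.1.trans hb)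
  intro lam (hlam : lam ≤ γ) lam' (hlam' : lam' ≤ γ) (heq : lam ⬝ᵥ g = lam' ⬝ᵥ g)
  have hsplit : IsMaxRep S g (lam + (γ - lam)) (f + g 0) := by
    rwa [add_tsub_cancel_of_le hlam]
  have hsplit' : IsMaxRep S g (lam' + (γ - lam')) (f + g 0) := by
    rwa [add_tsub_cancel_of_le hlam']
  have hρ := hsplit.exchange hgen hpos (heq ▸ hsplit'.of_add hgen hpos)
  have hρ' := hsplit'.exchange hgen hpos (heq ▸ hsplit.of_add hgen hpos)
  -- the two exchanged representations have total weight `2 * (γ ⬝ᵥ g ^ 2)`, the maximum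
  have hswap : (lam' + (γ - lam)) ⬝ᵥ g ^ 2 + (lam + (γ - lam')) ⬝ᵥ g ^ 2
      = (lam + (γ - lam)) ⬝ᵥ g ^ 2 + (lam' + (γ - lam')) ⬝ᵥ g ^ 2 := by
    simp only [add_dotProduct]
    ring
  rw [add_tsub_cancel_of_le hlam, add_tsub_cancel_of_le hlam'] at hswap
  have := huniq _ hρ (by linarith [hmax _ hρ'])
  exact (add_right_cancel (this.trans (add_tsub_cancel_of_le hlam).symm)).symm

theorem frobenius_add_eq_iff_eq_prod (hgen : Generates S g) (hpos : ∀ i, 0 < g i)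
    (hinj : Injective g) (hf : f ∉ S) (hfmax : ∀ n, f < n → n ∈ S) :
    f + g 0 = gammaN S (g 0) g ⬝ᵥ g ↔ g 0 = ∏ i, (gammaN S (g 0) g i + 1) := by
  have hAp := ncard_aperySet hgen.add_mem (hgen.apply_mem 0) (hpos 0) hfmax
  have hbox : (Set.Iic (gammaN S (g 0) g)).ncard = ∏ i, (gammaN S (g 0) g i + 1) := by
    rw [← Finset.coe_Iic, Set.ncard_coe_finset, Pi.card_Iic]
    simp
  constructor
  · intro hb
    refine hAp.symm.trans (Eq.trans ?_ hbox)
    rw [(aperySet_eq_gammaSet_iff hgen hpos hinj hf hfmax).2 hb, gammaSet_eq_image hgen,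
      (injOn_dotProduct_Iic_gammaN hgen hpos hinj hf hfmax hb).ncard_image]
  · intro hm
    refine (aperySet_eq_gammaSet_iff hgen hpos hinj hf hfmax).1
      (Set.eq_of_subset_of_ncard_le (aperySet_subset_gammaSet hgen hpos hinj hfmax) ?_ ?_)
    · rw [gammaSet_eq_image hgen]
      exact (Set.ncard_image_le (Set.finite_Iic _)).trans (hbox.trans (hm.symm.trans hAp.symm)).le
    · rw [gammaSet_eq_image hgen]
      exact (Set.finite_Iic _).image _

end Rectangular

theorem gammaRect_characterization_general (S : Set ℕ) {ν : ℕ} [NeZero ν] (g : Fin ν → ℕ)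
    (hgen : MinimalGen S g) (hmono : StrictMono g)
    (hmpos : 0 < g 0)
    (f : ℕ) (hf : f ∉ S) (hfmax : ∀ n, f < n → n ∈ S) :
    (AperySet S (g 0) = GammaSet S (g 0) g ↔
        f + g 0 = ∑ i ∈ Finset.univ.erase 0, gammaN S (g 0) g i * g i) ∧
    (f + g 0 = ∑ i ∈ Finset.univ.erase 0, gammaN S (g 0) g i * g i ↔
        g 0 = ∏ i ∈ Finset.univ.erase 0, (gammaN S (g 0) g i + 1)) := by
  have hpos : ∀ i, 0 < g i := fun i => hmpos.trans_le (hmono.monotone (Fin.zero_le i))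
  have hγ0 := gammaN_zero hgen.1
  rw [sum_erase _ (by rw [hγ0, zero_mul]), prod_erase _ (by rw [hγ0, zero_add])]
  exact ⟨aperySet_eq_gammaSet_iff hgen.1 hpos hmono.injective hf hfmax,
    frobenius_add_eq_iff_eq_prod hgen.1 hpos hmono.injective hf hfmax⟩

theorem gammaRect_characterization (S : Set ℕ) {ν : ℕ} [NeZero ν] (g : Fin ν → ℕ) (hν : 2 ≤ ν)
    (hS : IsNumSgp S) (hgen : MinimalGen S g) (hmono : StrictMono g)
    (hmpos : 0 < g 0) (hmul : ∀ s ∈ S, s ≠ 0 → g 0 ≤ s)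
    (f : ℕ) (hf : f ∉ S) (hfmax : ∀ n, f < n → n ∈ S) :
    (AperySet S (g 0) = GammaSet S (g 0) g ↔
        f + g 0 = ∑ i ∈ Finset.univ.erase 0, gammaN S (g 0) g i * g i) ∧
    (f + g 0 = ∑ i ∈ Finset.univ.erase 0, gammaN S (g 0) g i * g i ↔
        g 0 = ∏ i ∈ Finset.univ.erase 0, (gammaN S (g 0) g i + 1)) :=
  gammaRect_characterization_general S g hgen hmono hmpos f hf hfmax
end

section
/- For a numerical semigroup S with multiplicity m and generated by ν elements: if m = Π_{i=2}^ν (γ_i + 1), then ν ≤ Ω(m) + 1, where Ω(m) is the number of prime factors of m counted with multiplicity. In particular, if additionally m is prime then ν = 2. -/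
open Finset

/-!
A minimal generator `g_i` with `i ≠ 0` is an atom of `S`, so it lies in `Ap(S, m)`, has order `1`
and its trivial representation is its only one; moreover `h g_i ∉ Ap(S, m)` once `h ≥ m`, so the
supremum defining `γ_i` is taken over a bounded set containing `1`. Hence `γ_i ≥ 1` and `m` is a
product of `ν - 1` factors `γ_i + 1 ≥ 2`, each contributing at least one prime factor. For `m`
prime, `ν = 1` is excluded because the empty product would make `m = 1`.
-/

open ArithmeticFunction
open scoped ArithmeticFunction.Omega

lemma sum_single_mul {ν : ℕ} (g : Fin ν → ℕ) (i : Fin ν) (c : ℕ) :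
    ∑ k, (Pi.single i c : Fin ν → ℕ) k * g k = c * g i := by
  simp [Pi.single_apply, ite_mul]

namespace Generates

variable {S : Set ℕ} {ν : ℕ} {g : Fin ν → ℕ}

lemma sum_mem (hgen : Generates S g) (lam : Fin ν → ℕ) : ∑ i, lam i * g i ∈ S :=
  (hgen _).mpr ⟨lam, rfl⟩

lemma mem (hgen : Generates S g) (i : Fin ν) : g i ∈ S := by
  simpa [sum_single_mul] using hgen.sum_mem (Pi.single i 1)

lemma exists_rep_of_sum_eq (hgen : Generates S g) {h : ℕ} (f : Fin h → ℕ)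
    (hf : ∀ j, f j ∈ S ∧ f j ≠ 0) :
    ∃ lam : Fin ν → ℕ, ∑ k, lam k * g k = ∑ j, f j ∧ h ≤ ∑ k, lam k := by
  choose mu hmu using fun j => (hgen (f j)).mp (hf j).1
  have hpos : ∀ j, 1 ≤ ∑ k, mu j k := fun j => by
    by_contra! h0
    have hz : ∀ k, mu j k = 0 := fun k =>
      Finset.sum_eq_zero_iff.mp (Nat.lt_one_iff.mp h0) k (Finset.mem_univ k)
    exact (hf j).2 (by simp [← hmu j, hz])
  refine ⟨fun k => ∑ j, mu j k, ?_, ?_⟩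
  · simp only [Finset.sum_mul]
    rw [Finset.sum_comm]
    exact Finset.sum_congr rfl fun j _ => hmu j
  · calc h = ∑ _j : Fin h, 1 := by simp
      _ ≤ ∑ j, ∑ k, mu j k := Finset.sum_le_sum fun j _ => hpos j
      _ = ∑ k, ∑ j, mu j k := Finset.sum_comm

/-- `h g_i - g_j = (g_i - 1) g_j + (h - g_j) g_i` lies in `S` once `h ≥ g_j`. -/
lemma not_inApery_mul (hgen : Generates S g) (i j : Fin ν) (hi : g i ≠ 0) {h : ℕ}
    (hh : g j ≤ h) : ¬ InApery S (g j) (h * g i) := by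
  rintro ⟨-, hap⟩
  refine hap _ (hgen.sum_mem (Pi.single j (g i - 1) + Pi.single i (h - g j))) ?_
  simp only [Pi.add_apply, add_mul, Finset.sum_add_distrib, sum_single_mul]
  zify [Nat.one_le_iff_ne_zero.mpr hi, hh]
  ring

end Generates

namespace MinimalGen

variable {S : Set ℕ} {ν : ℕ} {g : Fin ν → ℕ}

lemma ne_zero (hgen : MinimalGen S g) (i : Fin ν) : g i ≠ 0 :=
  fun h0 => hgen.2 i ⟨0, rfl, by simp [h0]⟩

lemma injective (hgen : MinimalGen S g) : Function.Injective g := by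
  intro j i hji
  by_contra hne
  exact hgen.2 i ⟨Pi.single j 1, Pi.single_eq_of_ne' hne 1, by rw [sum_single_mul, one_mul, hji]⟩

lemma eq_single_of_sum_eq (hgen : MinimalGen S g) {i : Fin ν} {lam : Fin ν → ℕ}
    (hsum : ∑ k, lam k * g k = g i) : lam = Pi.single i 1 := by
  have hi : lam i ≠ 0 := fun h0 => hgen.2 i ⟨lam, h0, hsum⟩
  have hsplit : (lam i - 1) * g i + ∑ k ∈ Finset.univ.erase i, lam k * g k = 0 := by
    rw [← Finset.add_sum_erase _ _ (Finset.mem_univ i)] at hsum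
    zify [Nat.one_le_iff_ne_zero.mpr hi] at hsum ⊢
    linarith
  obtain ⟨hlam_i, hrest⟩ := Nat.add_eq_zero_iff.mp hsplit
  funext k
  rcases eq_or_ne k i with rfl | hk
  · have := (Nat.mul_eq_zero.mp hlam_i).resolve_right (hgen.ne_zero k)
    simp only [Pi.single_eq_same]
    omega
  · have := Finset.sum_eq_zero_iff.mp hrest k (Finset.mem_erase.mpr ⟨hk, Finset.mem_univ k⟩)
    rw [Pi.single_eq_of_ne hk]
    exact (Nat.mul_eq_zero.mp this).resolve_right (hgen.ne_zero k)

lemma card_le_one_of_sum_eq (hgen : MinimalGen S g) (i : Fin ν) {h : ℕ} (f : Fin h → ℕ)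
    (hf : ∀ j, f j ∈ S ∧ f j ≠ 0) (hsum : ∑ j, f j = g i) : h ≤ 1 := by
  obtain ⟨lam, hlam, hle⟩ := hgen.1.exists_rep_of_sum_eq f hf
  rw [hsum] at hlam
  simpa [hgen.eq_single_of_sum_eq hlam, Pi.single_apply] using hle

lemma add_ne_gen (hgen : MinimalGen S g) (i : Fin ν) {a b : ℕ} (ha : a ∈ S) (hb : b ∈ S)
    (ha0 : a ≠ 0) (hb0 : b ≠ 0) : a + b ≠ g i := fun hab => by
  have := hgen.card_le_one_of_sum_eq i ![a, b]
    (fun j => by fin_cases j <;> exact ⟨‹_›, ‹_›⟩) (by simpa using hab)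
  omega

lemma ordS_eq_one (hgen : MinimalGen S g) (i : Fin ν) : ordS S (g i) = 1 := by
  have hset : {h : ℕ | ∃ f : Fin h → ℕ, (∀ j, f j ∈ S ∧ f j ≠ 0) ∧ ∑ j, f j = g i} = {1} := by
    ext h
    refine ⟨fun ⟨f, hf, hsum⟩ => ?_, fun h1 => ?_⟩
    · have hh : h ≠ 0 := by
        rintro rfl
        exact hgen.ne_zero i (by simpa using hsum.symm)
      have := hgen.card_le_one_of_sum_eq i f hf hsum
      exact Set.mem_singleton_iff.mpr (by omega)
    · rw [Set.mem_singleton_iff.mp h1]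
      exact ⟨fun _ => g i, fun _ => ⟨hgen.1.mem i, hgen.ne_zero i⟩, by simp⟩
  rw [ordS, hset, csSup_singleton]

lemma uniqueMaxRep (hgen : MinimalGen S g) (i : Fin ν) : UniqueMaxRep S g (g i) := by
  refine ⟨Pi.single i 1, ⟨by rw [sum_single_mul, one_mul], ?_⟩, fun lam hlam => ?_⟩
  · simp [hgen.ordS_eq_one i, Pi.single_apply]
  · exact hgen.eq_single_of_sum_eq hlam.1

lemma inApery [NeZero ν] (hgen : MinimalGen S g) {i : Fin ν} (hi : i ≠ 0) :
    InApery S (g 0) (g i) := by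
  refine ⟨hgen.1.mem i, fun u hu hsum => ?_⟩
  rcases eq_or_ne u 0 with rfl | hu0
  · exact hi (hgen.injective (by simpa using hsum.symm))
  · exact hgen.add_ne_gen i hu (hgen.1.mem 0) hu0 (hgen.ne_zero 0) hsum

lemma one_le_gammaN [NeZero ν] (hgen : MinimalGen S g) {i : Fin ν} (hi : i ≠ 0) :
    1 ≤ gammaN S (g 0) g i := by
  refine le_csSup ⟨g 0, fun h ⟨hap, _⟩ => ?_⟩ ?_
  · by_contra! hlt
    exact hgen.1.not_inApery_mul i 0 (hgen.ne_zero i) hlt.le hap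
  · show InApery S (g 0) (1 * g i) ∧ ordS S (1 * g i) = 1 ∧ UniqueMaxRep S g (1 * g i)
    rw [one_mul]
    exact ⟨hgen.inApery hi, hgen.ordS_eq_one i, hgen.uniqueMaxRep i⟩

end MinimalGen

lemma card_le_cardFactors_prod {ι : Type*} (t : Finset ι) (f : ι → ℕ)
    (hf : ∀ i ∈ t, 2 ≤ f i) : t.card ≤ Ω (∏ i ∈ t, f i) := by
  induction t using Finset.cons_induction with
  | empty => simp
  | cons a t ha ih =>
    have hfa : 2 ≤ f a := hf a (Finset.mem_cons_self a t)
    have ih := ih fun i hi => hf i (Finset.mem_cons_of_mem hi)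
    have hprod : ∏ i ∈ t, f i ≠ 0 := Finset.prod_ne_zero_iff.mpr fun i hi => by
      have := hf i (Finset.mem_cons_of_mem hi); omega
    rw [Finset.prod_cons, Finset.card_cons, cardFactors_mul (by omega) hprod]
    have := cardFactors_pos_iff_one_lt.mpr (show 1 < f a by omega)
    omega

theorem embdim_le_Omega_mult_general (S : Set ℕ) {ν : ℕ} [NeZero ν] (g : Fin ν → ℕ)
    (hgen : MinimalGen S g)
    (hprod : g 0 = ∏ i ∈ Finset.univ.erase 0, (gammaN S (g 0) g i + 1)) :
    ν ≤ (g 0).primeFactorsList.length + 1 ∧ (Nat.Prime (g 0) → ν = 2) := by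
  have hcard : (Finset.univ.erase (0 : Fin ν)).card = ν - 1 := by
    rw [Finset.card_erase_of_mem (Finset.mem_univ _), Finset.card_univ, Fintype.card_fin]
  have hΩ : ν - 1 ≤ Ω (g 0) := by
    rw [← hcard, hprod]
    refine card_le_cardFactors_prod _ _ fun i hi => ?_
    have := hgen.one_le_gammaN (Finset.mem_erase.mp hi).1
    omega
  refine ⟨by rw [← cardFactors_apply]; omega, fun hp => ?_⟩
  have hν0 : ν ≠ 0 := NeZero.ne ν
  have hν1 : ν ≠ 1 := by
    rintro rfl
    simp only [univ_unique, Fin.default_eq_zero, erase_singleton, prod_empty] at hprod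
    exact Nat.not_prime_one (hprod ▸ hp)
  rw [cardFactors_apply_prime hp] at hΩ
  omega

theorem embdim_le_Omega_mult (S : Set ℕ) {ν : ℕ} [NeZero ν] (g : Fin ν → ℕ) (hν : 2 ≤ ν)
    (hS : IsNumSgp S) (hgen : MinimalGen S g) (hmono : StrictMono g)
    (hmpos : 0 < g 0) (hmul : ∀ s ∈ S, s ≠ 0 → g 0 ≤ s)
    (hprod : g 0 = ∏ i ∈ Finset.univ.erase 0, (gammaN S (g 0) g i + 1)) :
    ν ≤ (g 0).primeFactorsList.length + 1 ∧ (Nat.Prime (g 0) → ν = 2) :=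
  embdim_le_Omega_mult_general S g hgen hprod
end
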